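/- Let (X, d) be a metric space that is a subset of ℝⁿ with ‖x − x'‖ ≤ d(x, x')/√λ₀ for all x, x' ∈ X and some λ₀ > 0, and let F : X × ℝᵐ → ℝᵖ satisfy ‖F(x,u) − F(x',u')‖ ≤ L·(d(x,x') + ‖u − u'‖). Let x, x* : [0,T] → X and u, u* : [0,T] → ℝᵐ be trajectories, δ_u ≥ 0, λ ∈ ℝ, and let η : [0,T] → ℝ be differentiable with: (i) η'(t) ≤ −λ·η(t) + ‖F(x(t), u(t))‖, (ii) d(x(t), x*(t)) ≤ η(t), and (iii) ‖u(t) − u*(t)‖ ≤ δ_u·‖x(t) − x*(t)‖, for all t. Then for all t ∈ [0,T]: η'(t) ≤ (L·(1 + δ_u/√λ₀) − λ)·η(t) + ‖F(x*(t), u*(t))‖. -/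
import Mathlib


/-- Converting the tracking-error differential inequality, which depends
on the executed trajectory `(x,u)`, into one depending only on the nominal plan
`(x*,u*)`: under the Lipschitz bound on `F`, the norm-vs-`d` bound, the tube conditions
`d(x(t),x*(t)) ≤ η(t)` and `‖u(t) − u*(t)‖ ≤ δ_u‖x(t) − x*(t)‖`, and
`η'(t) ≤ −λ η(t) + ‖F(x(t),u(t))‖`, we get
`η'(t) ≤ (L(1 + δ_u/√λ₀) − λ) η(t) + ‖F(x*(t),u*(t))‖`. -/
theorem stmt_10 {n m p : ℕ} (X : Set (EuclideanSpace ℝ (Fin n)))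
    (d : EuclideanSpace ℝ (Fin n) → EuclideanSpace ℝ (Fin n) → ℝ)
    (lam0 : ℝ) (hlam0 : 0 < lam0)
    -- (X, d) is a metric space:
    (hd_self : ∀ x ∈ X, d x x = 0)
    (hd_nonneg : ∀ x ∈ X, ∀ x' ∈ X, 0 ≤ d x x')
    (hd_symm : ∀ x ∈ X, ∀ x' ∈ X, d x x' = d x' x)
    (hd_tri : ∀ x ∈ X, ∀ y ∈ X, ∀ z ∈ X, d x z ≤ d x y + d y z)
    (hnorm_d : ∀ x ∈ X, ∀ x' ∈ X, ‖x - x'‖ ≤ d x x' / Real.sqrt lam0)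
    (F : EuclideanSpace ℝ (Fin n) → EuclideanSpace ℝ (Fin m) → EuclideanSpace ℝ (Fin p))
    (L : ℝ) (hL : 0 ≤ L)
    (hLip : ∀ x ∈ X, ∀ x' ∈ X, ∀ (u u' : EuclideanSpace ℝ (Fin m)),
      ‖F x u - F x' u'‖ ≤ L * (d x x' + ‖u - u'‖))
    (T : ℝ) (hT : 0 < T)
    (x xs : ℝ → EuclideanSpace ℝ (Fin n))
    (u us : ℝ → EuclideanSpace ℝ (Fin m))
    (hxX : ∀ t ∈ Set.Icc 0 T, x t ∈ X) (hxsX : ∀ t ∈ Set.Icc 0 T, xs t ∈ X)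
    (δu lam : ℝ) (hδu : 0 ≤ δu)
    (η η' : ℝ → ℝ)
    (hderiv : ∀ t ∈ Set.Icc 0 T, HasDerivAt η (η' t) t)
    (h1 : ∀ t ∈ Set.Icc 0 T, η' t ≤ -lam * η t + ‖F (x t) (u t)‖)
    (h2 : ∀ t ∈ Set.Icc 0 T, d (x t) (xs t) ≤ η t)
    (h3 : ∀ t ∈ Set.Icc 0 T, ‖u t - us t‖ ≤ δu * ‖x t - xs t‖) :
    ∀ t ∈ Set.Icc 0 T,
      η' t ≤ (L * (1 + δu / Real.sqrt lam0) - lam) * η t + ‖F (xs t) (us t)‖ := by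
  intro t ht
  have hx := hxX t ht
  have hxs := hxsX t ht
  have hdxx := h2 t ht
  have hdnn := hd_nonneg _ hx _ hxs
  have hη : 0 ≤ η t := le_trans hdnn hdxx
  have hs : 0 < Real.sqrt lam0 := Real.sqrt_pos.mpr hlam0
  have hnx : ‖x t - xs t‖ ≤ η t / Real.sqrt lam0 := by
    calc ‖x t - xs t‖ ≤ d (x t) (xs t) / Real.sqrt lam0 := hnorm_d _ hx _ hxs
      _ ≤ η t / Real.sqrt lam0 := by
        gcongr
  have hu : ‖u t - us t‖ ≤ δu * (η t / Real.sqrt lam0) :=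
    (h3 t ht).trans (mul_le_mul_of_nonneg_left hnx hδu)
  have hF : ‖F (x t) (u t)‖ ≤ ‖F (xs t) (us t)‖ + L * (η t + δu * (η t / Real.sqrt lam0)) := by
    have := hLip _ hx _ hxs (u t) (us t)
    have h4 : ‖F (x t) (u t)‖ ≤ ‖F (xs t) (us t)‖ + ‖F (x t) (u t) - F (xs t) (us t)‖ :=
      norm_le_norm_add_norm_sub' _ _
    have h5 : ‖F (x t) (u t) - F (xs t) (us t)‖ ≤ L * (η t + δu * (η t / Real.sqrt lam0)) :=
      this.trans (mul_le_mul_of_nonneg_left (add_le_add hdxx hu) hL)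
    linarith
  have := h1 t ht
  have : η' t ≤ -lam * η t + (‖F (xs t) (us t)‖ + L * (η t + δu * (η t / Real.sqrt lam0))) :=
    this.trans (by linarith)
  have heq : -lam * η t + (‖F (xs t) (us t)‖ + L * (η t + δu * (η t / Real.sqrt lam0))) =
      (L * (1 + δu / Real.sqrt lam0) - lam) * η t + ‖F (xs t) (us t)‖ := by
    field_simp
    ring
  linarith [heq ▸ this]
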